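/- arXiv:1003.4963 — 5 statements merged into one kernel-verified Lean document; each statement's English description precedes it below -/
import Mathlib

section
/- Let r, q, p be points in the Euclidean plane such that the angle ∠(r q p) at q satisfies ∠(r q p) ≥ 3π/4, and let d, k be real numbers with 0 ≤ d and √2·d ≤ k. Then k·dist(q,p) + d·dist(r,q) ≤ k·dist(r,p). -/
/-!
By the law of cosines, an angle of at least `3π/4` at `q` gives
`|rp|² ≥ |rq|² + |qp|² + √2 |rq| |qp|`. Squaring the claimed inequality, it then reduces to
`2d² ≤ k²` and `2kd ≤ √2 k²`, both immediate from `√2 d ≤ k`.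
-/

open EuclideanGeometry Real

section
variable {V P : Type*} [NormedAddCommGroup V] [InnerProductSpace ℝ V] [MetricSpace P]
  [NormedAddTorsor V P]

theorem EuclideanGeometry.dist_sq_sub_two_mul_cos_le_of_le_angle {a b c : P} {θ : ℝ}
    (hθ : 0 ≤ θ) (h : θ ≤ ∠ a b c) :
    dist a b ^ 2 + dist b c ^ 2 - 2 * cos θ * dist a b * dist b c ≤ dist a c ^ 2 := by
  have hcos : cos (∠ a b c) ≤ cos θ := cos_le_cos_of_nonneg_of_le_pi hθ (angle_le_pi a b c) h
  have hlaw := law_cos a b c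
  rw [dist_comm c b] at hlaw
  nlinarith [mul_nonneg (dist_nonneg (x := a) (y := b)) (dist_nonneg (x := b) (y := c))]

theorem EuclideanGeometry.dist_sq_add_sqrt_two_mul_le_of_three_pi_div_four_le_angle {a b c : P}
    (h : 3 * π / 4 ≤ ∠ a b c) :
    dist a b ^ 2 + dist b c ^ 2 + √2 * dist a b * dist b c ≤ dist a c ^ 2 := by
  have hcos : cos (3 * π / 4) = -(√2 / 2) := by
    rw [show 3 * π / 4 = π - π / 4 by ring, cos_pi_sub, cos_pi_div_four]
  have := dist_sq_sub_two_mul_cos_le_of_le_angle (by positivity) h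
  rw [hcos] at this
  linarith

end

theorem mul_add_mul_le_of_sq_add_sqrt_two_mul_le {a b c d k : ℝ} (ha : 0 ≤ a) (hb : 0 ≤ b)
    (hc : 0 ≤ c) (habc : a ^ 2 + b ^ 2 + √2 * a * b ≤ c ^ 2) (hd : 0 ≤ d) (hk : √2 * d ≤ k) :
    k * b + d * a ≤ k * c := by
  have hsqrt2 : √2 * √2 = 2 := mul_self_sqrt zero_le_two
  have hk0 : 0 ≤ k := (mul_nonneg (sqrt_nonneg 2) hd).trans hk
  have hd_sq : 2 * d ^ 2 ≤ k ^ 2 := by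
    nlinarith [mul_le_mul hk hk (mul_nonneg (sqrt_nonneg 2) hd) hk0]
  have hkd : 2 * (k * d) ≤ √2 * k ^ 2 :=
    calc 2 * (k * d) = √2 * k * (√2 * d) := by linear_combination (-(k * d)) * hsqrt2
      _ ≤ √2 * k * k := mul_le_mul_of_nonneg_left hk (mul_nonneg (sqrt_nonneg 2) hk0)
      _ = √2 * k ^ 2 := by ring
  have hsq : (k * b + d * a) ^ 2 ≤ (k * c) ^ 2 := by
    nlinarith [mul_le_mul_of_nonneg_left habc (sq_nonneg k),
      mul_le_mul_of_nonneg_right hd_sq (sq_nonneg a),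
      mul_le_mul_of_nonneg_right hkd (mul_nonneg ha hb)]
  exact (le_abs_self _).trans (abs_le_of_sq_le_sq hsq (mul_nonneg hk0 hc))

theorem stmt_1 (r q p : EuclideanSpace ℝ (Fin 2)) (d k : ℝ)
    (hangle : ∠ r q p ≥ 3 * π / 4) (hd : 0 ≤ d) (hk : Real.sqrt 2 * d ≤ k) :
    k * dist q p + d * dist r q ≤ k * dist r p :=
  mul_add_mul_le_of_sq_add_sqrt_two_mul_le dist_nonneg dist_nonneg dist_nonneg
    (dist_sq_add_sqrt_two_mul_le_of_three_pi_div_four_le_angle hangle) hd hk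
end

section
/- Let s, r, p be points in the Euclidean plane with s ≠ r, s ≠ p, dist(s,r) ≤ dist(s,p), and angle α = ∠(r s p) ≤ π/4. Let r' be the point on the segment from s to p with dist(s,r') = dist(s,r) (explicitly, r' = s + (dist(s,r)/dist(s,p))·(p − s)). Then for every real K with K ≥ 1/(1 − 2·sin(π/8)), one has dist(s,r) + K·(dist(r,r') + dist(r',p)) ≤ K·dist(s,p). -/
/-!
Let `a = dist s r ≤ b = dist s p` and `α = ∠ r s p`. The point `r'` is on the ray `s p` with
`dist s r' = a`, so `dist r' p = b - a`, and `r s r'` is isosceles with apex angle `α`, whence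
`dist r r' = 2 a sin (α / 2) ≤ 2 a sin (π / 8)`. The claim becomes
`a ≤ K a (1 - 2 sin (π / 8))`, which is exactly the bound on `K`.
-/

open EuclideanGeometry Real

namespace EuclideanGeometry

variable {V P : Type*} [NormedAddCommGroup V] [InnerProductSpace ℝ V] [MetricSpace P]
  [NormedAddTorsor V P]

theorem dist_eq_two_mul_dist_mul_sin_half_angle_of_dist_eq {p₁ p₂ p₃ : P}
    (h : dist p₂ p₁ = dist p₂ p₃) :
    dist p₁ p₃ = 2 * dist p₂ p₁ * sin (∠ p₁ p₂ p₃ / 2) := by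
  have hsin : 0 ≤ sin (∠ p₁ p₂ p₃ / 2) :=
    sin_nonneg_of_nonneg_of_le_pi (by linarith [angle_nonneg p₁ p₂ p₃])
      (by linarith [angle_le_pi p₁ p₂ p₃, pi_pos])
  have hcos : cos (∠ p₁ p₂ p₃) = 1 - 2 * sin (∠ p₁ p₂ p₃ / 2) ^ 2 := by
    rw [sin_sq_eq_half_sub, mul_div_cancel₀ _ two_ne_zero]; ring
  have hlaw := law_cos p₁ p₂ p₃
  rw [dist_comm p₁ p₂, dist_comm p₃ p₂, ← h, hcos] at hlaw
  rw [← sq_eq_sq₀ dist_nonneg (by positivity), sq, hlaw]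
  ring

theorem dist_le_two_mul_dist_mul_sin_half_of_dist_eq_of_angle_le {p₁ p₂ p₃ : P} {θ : ℝ}
    (h : dist p₂ p₁ = dist p₂ p₃) (hθ : ∠ p₁ p₂ p₃ ≤ θ) (hθπ : θ ≤ π) :
    dist p₁ p₃ ≤ 2 * dist p₂ p₁ * sin (θ / 2) := by
  rw [dist_eq_two_mul_dist_mul_sin_half_angle_of_dist_eq h]
  gcongr
  exact sin_le_sin_of_le_of_le_pi_div_two (by linarith [angle_nonneg p₁ p₂ p₃, pi_pos])
    (by linarith) (by linarith)

end EuclideanGeometry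

theorem Real.sin_pi_div_eight_lt_half : sin (π / 8) < 1 / 2 := by
  rw [← sin_pi_div_six]
  exact sin_lt_sin_of_lt_of_le_pi_div_two (by linarith [pi_pos]) (by linarith [pi_pos])
    (by linarith [pi_pos])

theorem stmt_2_general (s r p : EuclideanSpace ℝ (Fin 2))
    (hsr : s ≠ r)
    (hle : dist s r ≤ dist s p)
    (hangle : ∠ r s p ≤ π / 4)
    (r' : EuclideanSpace ℝ (Fin 2))
    (hr' : r' = s + (dist s r / dist s p) • (p - s))
    (K : ℝ) (hK : K ≥ 1 / (1 - 2 * Real.sin (π / 8))) :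
    dist s r + K * (dist r r' + dist r' p) ≤ K * dist s p := by
  set a := dist s r
  set b := dist s p
  have ha : 0 < a := dist_pos.2 hsr
  have hb : 0 < b := ha.trans_le hle
  have hr'_line : r' = AffineMap.lineMap s p (a / b) := by
    rw [hr', AffineMap.lineMap_apply_module', add_comm]
  have hsr' : dist s r' = a := by
    rw [hr'_line, dist_left_lineMap, Real.norm_of_nonneg (by positivity), div_mul_cancel₀ a hb.ne']
  have hr'p : dist r' p = b - a := by
    rw [hr'_line, dist_lineMap_right, Real.norm_of_nonneg (by rwa [sub_nonneg, div_le_one hb]),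
      sub_mul, div_mul_cancel₀ a hb.ne', one_mul]
  have hangle' : ∠ r s r' = ∠ r s p :=
    angle_smul_right_of_pos r (div_pos ha hb) (by rw [hr'_line, AffineMap.lineMap_vsub_left])
  have hrr' : dist r r' ≤ 2 * a * sin (π / 4 / 2) :=
    dist_le_two_mul_dist_mul_sin_half_of_dist_eq_of_angle_le hsr'.symm (hangle'.trans_le hangle)
      (by linarith [pi_pos])
  rw [div_div, show (4 : ℝ) * 2 = 8 by norm_num] at hrr'
  have hc : 0 < 1 - 2 * sin (π / 8) := by linarith [sin_pi_div_eight_lt_half]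
  have hK0 : 0 ≤ K := (one_div_pos.2 hc).le.trans hK
  have hK' : 1 ≤ K * (1 - 2 * sin (π / 8)) := (div_le_iff₀ hc).1 hK
  rw [hr'p]
  calc a + K * (dist r r' + (b - a)) ≤ a + K * (2 * a * sin (π / 8) + (b - a)) := by gcongr
    _ = K * b - (K * (1 - 2 * sin (π / 8)) - 1) * a := by ring
    _ ≤ K * b := sub_le_self _ (mul_nonneg (sub_nonneg.2 hK') ha.le)

theorem stmt_2 (s r p : EuclideanSpace ℝ (Fin 2))
    (hsr : s ≠ r) (hsp : s ≠ p)
    (hle : dist s r ≤ dist s p)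
    (hangle : ∠ r s p ≤ π / 4)
    (r' : EuclideanSpace ℝ (Fin 2))
    (hr' : r' = s + (dist s r / dist s p) • (p - s))
    (K : ℝ) (hK : K ≥ 1 / (1 - 2 * Real.sin (π / 8))) :
    dist s r + K * (dist r r' + dist r' p) ≤ K * dist s p :=
  stmt_2_general s r p hsr hle hangle r' hr' K hK
end

section
/- Let a, b, c be three pairwise distinct points lying on a common circle in the Euclidean plane (i.e., all at distance ρ from some center o, with ρ > 0), and suppose the angle at b satisfies ∠(a b c) = π − α for some real α with 0 ≤ α ≤ π/2. Then dist(a,b) + dist(b,c) ≤ dist(a,c)/cos(α/2). -/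
open EuclideanGeometry Real

/-- Since `cos (π - α) = -cos α` and `2 cos² (α / 2) = 1 + cos α`, the law of cosines gives
`dist a c ^ 2 - ((dist a b + dist b c) cos (α / 2)) ^ 2 = (dist a b - dist b c) ^ 2 (1 - cos α) / 2`. -/
theorem EuclideanGeometry.dist_add_dist_mul_cos_half_le_of_angle_eq_pi_sub
    {V P : Type*} [NormedAddCommGroup V] [InnerProductSpace ℝ V] [MetricSpace P]
    [NormedAddTorsor V P] {a b c : P} {α : ℝ} (h : ∠ a b c = π - α) :
    (dist a b + dist b c) * cos (α / 2) ≤ dist a c := by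
  have hlaw := law_cos a b c
  rw [h, cos_pi_sub, dist_comm c b] at hlaw
  have hhalf : cos (α / 2) ^ 2 = 1 / 2 + cos α / 2 := by
    rw [cos_sq, mul_div_cancel₀ α two_ne_zero]
  have hsq : ((dist a b + dist b c) * cos (α / 2)) ^ 2 ≤ dist a c ^ 2 := by
    nlinarith [sq_nonneg (dist a b - dist b c), cos_le_one α]
  exact (abs_le_of_sq_le_sq' hsq dist_nonneg).2

theorem stmt_3_general (a b c : EuclideanSpace ℝ (Fin 2)) (α : ℝ)
    (hα0 : 0 ≤ α) (hα1 : α ≤ π / 2)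
    (hangle : ∠ a b c = π - α) :
    dist a b + dist b c ≤ dist a c / Real.cos (α / 2) := by
  have hcos : 0 < cos (α / 2) := cos_pos_of_mem_Ioo ⟨by linarith [pi_pos], by linarith [pi_pos]⟩
  rw [le_div_iff₀ hcos]
  exact dist_add_dist_mul_cos_half_le_of_angle_eq_pi_sub hangle

theorem stmt_3 (a b c o : EuclideanSpace ℝ (Fin 2)) (ρ α : ℝ)
    (hρ : 0 < ρ)
    (hab : a ≠ b) (hbc : b ≠ c) (hac : a ≠ c)
    (ha : dist o a = ρ) (hb : dist o b = ρ) (hc : dist o c = ρ)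
    (hα0 : 0 ≤ α) (hα1 : α ≤ π / 2)
    (hangle : ∠ a b c = π - α) :
    dist a b + dist b c ≤ dist a c / Real.cos (α / 2) :=
  stmt_3_general a b c α hα0 hα1 hangle
end

section
/- Let p, u, v be three non-collinear points lying on a common circle with center o and radius ρ > 0 in the Euclidean plane, and let x be a point of the closed disk bounded by that circle (dist(o,x) ≤ ρ) such that x and p lie strictly on opposite sides of the line through u and v. Then ∠(u x v) ≥ π − ∠(u p v). -/
/-!
Let `r` be the second intersection of the ray from `u` through `x` with the circle. Since `x` lies
in the disk, `x` is between `u` and `r`, so `r` is on the same side of `uv` as `x`, hence opposite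
to `p`; then `u p v r` is a cyclic quadrilateral and `∠ u r v = π - ∠ u p v`. Finally `∠ u x v` is
an exterior angle of the triangle `x r v`, so it is at least `∠ u r v`.
-/

open EuclideanGeometry Real

namespace EuclideanGeometry

variable {V P : Type*} [NormedAddCommGroup V] [InnerProductSpace ℝ V] [MetricSpace P]
  [NormedAddTorsor V P]

theorem _root_.Wbtw.angle_le_angle_of_ne {u x r v : P} (h : Wbtw ℝ u x r) (hxu : x ≠ u)
    (hxv : x ≠ v) : ∠ u r v ≤ ∠ u x v := by
  rcases eq_or_ne x r with rfl | hxr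
  · exact le_rfl
  have hsbtw : Sbtw ℝ u x r := ⟨h, hxu, hxr⟩
  have hsupp : ∠ v x u + ∠ v x r = π := angle_add_angle_eq_pi_of_angle_eq_pi v hsbtw.angle₁₂₃_eq_pi
  have hsum : ∠ v x r + ∠ x r v + ∠ r v x = π := angle_add_angle_add_angle_eq_pi r hxv
  have hr : ∠ v r x = ∠ v r u := hsbtw.symm.angle_eq_right v
  rw [angle_comm u x v, angle_comm u r v, ← hr, angle_comm v r x]
  linarith [angle_nonneg r v x]

theorem Sphere.eq_or_eq_of_mem_affineSpan_pair {s : Sphere P} {u v r : P} (hu : u ∈ s)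
    (hv : v ∈ s) (hr : r ∈ s) (hrL : r ∈ line[ℝ, u, v]) : r = u ∨ r = v := by
  have hvL : v ∈ line[ℝ, u, v] := right_mem_affineSpan_pair ℝ u v
  rcases (s.eq_or_eq_secondInter_iff_mem_of_mem_affineSpan_pair hu hvL).2 hv with rfl | hv'
  · simpa using hrL
  · have hr' := (s.eq_or_eq_secondInter_iff_mem_of_mem_affineSpan_pair hu hrL).2 hr
    rwa [← hv'] at hr'

theorem Sphere.sSameSide_secondInter {s : Sphere P} {u v x : P} (hu : u ∈ s) (hv : v ∈ s)
    (hx : dist x s.center ≤ s.radius) (hxL : x ∉ line[ℝ, u, v]) :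
    line[ℝ, u, v].SSameSide (s.secondInter u (x -ᵥ u)) x := by
  have hw : Wbtw ℝ u x (s.secondInter u (x -ᵥ u)) := s.wbtw_secondInter hu hx
  have huL : u ∈ line[ℝ, u, v] := left_mem_affineSpan_pair ℝ u v
  refine ⟨(hw.wSameSide₂₃ huL).symm, fun hrL => ?_, hxL⟩
  rcases s.eq_or_eq_of_mem_affineSpan_pair hu hv ((s.secondInter_mem _).2 hu) hrL with h | h
  · rw [h] at hw
    exact hxL ((wbtw_self_iff ℝ).1 hw ▸ huL)
  · rw [h] at hw
    exact hxL hw.mem_affineSpan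

variable [Fact (Module.finrank ℝ V = 2)]

theorem Sphere.angle_eq_pi_sub_angle_of_sOppSide {s : Sphere P} {u v p r : P} (hu : u ∈ s)
    (hv : v ∈ s) (hp : p ∈ s) (hr : r ∈ s) (huv : u ≠ v) (hside : line[ℝ, u, v].SOppSide r p) :
    ∠ u r v = π - ∠ u p v := by
  have : FiniteDimensional ℝ V := .of_fact_finrank_eq_two
  let : Module.Oriented ℝ V (Fin 2) := ⟨(Module.finBasisOfFinrankEq ℝ V Fact.out).orientation⟩
  have huL : u ∈ line[ℝ, u, v] := left_mem_affineSpan_pair ℝ u v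
  have hvL : v ∈ line[ℝ, u, v] := right_mem_affineSpan_pair ℝ u v
  have hpu : p ≠ u := fun h => hside.right_notMem (h ▸ huL)
  have hpv : p ≠ v := fun h => hside.right_notMem (h ▸ hvL)
  have hru : r ≠ u := fun h => hside.left_notMem (h ▸ huL)
  have hrv : r ≠ v := fun h => hside.left_notMem (h ▸ hvL)
  -- reflecting `v` in `r` turns the supplementary angle at `r` into an inscribed angle equal to
  -- the one at `p`
  set v' := AffineEquiv.pointReflection ℝ r v
  have hv'r : v' ≠ r := by
    simpa [v'] using (AffineEquiv.pointReflection ℝ r).injective.ne hrv.symm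
  have hv' : ∡ u r v' = ∡ u r v + π := oangle_pointReflection_right hru.symm hrv.symm
  have hsign_p : (∡ u p v).sign ≠ 0 := by
    rw [ne_eq, oangle_sign_eq_zero_iff_collinear]
    exact fun hcol => hside.right_notMem
      (hcol.mem_affineSpan_of_mem_of_ne (by simp) (by simp) (by simp) huv)
  have hsign : (∡ u p v).sign = (∡ u r v').sign := by
    rw [hv', Real.Angle.sign_add_pi, hside.oangle_sign_eq_neg huL hvL]
  have hinscribed : (2 : ℤ) • ∡ u p v = (2 : ℤ) • ∡ u r v' := by
    rw [hv', smul_add, Real.Angle.two_zsmul_coe_pi, add_zero]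
    exact s.two_zsmul_oangle_eq hu hp hr hv hpu hpv hru hrv
  have hoangle : ∡ u p v = ∡ u r v' := (Real.Angle.two_zsmul_eq_iff_eq hsign_p hsign).1 hinscribed
  have hangle : ∠ u p v = ∠ u r v' := by
    rw [angle_eq_abs_oangle_toReal hpu.symm hpv.symm, angle_eq_abs_oangle_toReal hru.symm hv'r,
      hoangle]
  rw [hangle, angle_pointReflection_right, sub_sub_cancel]

end EuclideanGeometry

theorem stmt_5_general (p u v o x : EuclideanSpace ℝ (Fin 2)) (ρ : ℝ)
    (hncol : ¬ Collinear ℝ ({p, u, v} : Set (EuclideanSpace ℝ (Fin 2))))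
    (hp : dist o p = ρ) (hu : dist o u = ρ) (hv : dist o v = ρ)
    (hx : dist o x ≤ ρ)
    (hside : (affineSpan ℝ ({u, v} : Set (EuclideanSpace ℝ (Fin 2)))).SOppSide x p) :
    ∠ u x v ≥ π - ∠ u p v := by
  have : Fact (Module.finrank ℝ (EuclideanSpace ℝ (Fin 2)) = 2) := ⟨finrank_euclideanSpace_fin⟩
  set s : Sphere (EuclideanSpace ℝ (Fin 2)) := ⟨o, ρ⟩
  have hps : p ∈ s := mem_sphere'.2 hp
  have hus : u ∈ s := mem_sphere'.2 hu
  have hvs : v ∈ s := mem_sphere'.2 hv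
  have hxs : dist x s.center ≤ s.radius := by rwa [dist_comm]
  have huv : u ≠ v := by
    rintro rfl
    exact hncol (by simpa using collinear_pair ℝ p u)
  have hxu : x ≠ u := fun h => hside.left_notMem (h ▸ left_mem_affineSpan_pair ℝ u v)
  have hxv : x ≠ v := fun h => hside.left_notMem (h ▸ right_mem_affineSpan_pair ℝ u v)
  have hopp := (s.sSameSide_secondInter hus hvs hxs hside.left_notMem).trans_sOppSide hside
  calc π - ∠ u p v = ∠ u (s.secondInter u (x -ᵥ u)) v :=
        (s.angle_eq_pi_sub_angle_of_sOppSide hus hvs hps ((s.secondInter_mem _).2 hus) huv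
          hopp).symm
    _ ≤ ∠ u x v := (s.wbtw_secondInter hus hxs).angle_le_angle_of_ne hxu hxv

theorem stmt_5 (p u v o x : EuclideanSpace ℝ (Fin 2)) (ρ : ℝ)
    (hρ : 0 < ρ)
    (hncol : ¬ Collinear ℝ ({p, u, v} : Set (EuclideanSpace ℝ (Fin 2))))
    (hp : dist o p = ρ) (hu : dist o u = ρ) (hv : dist o v = ρ)
    (hx : dist o x ≤ ρ)
    (hside : (affineSpan ℝ ({u, v} : Set (EuclideanSpace ℝ (Fin 2)))).SOppSide x p) :
    ∠ u x v ≥ π - ∠ u p v :=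
  stmt_5_general p u v o x ρ hncol hp hu hv hx hside
end

section
/- Let s, r, p, q' be four points lying on a common circle in the Euclidean plane (all at distance ρ > 0 from some center o), with r, p, s non-collinear, such that q' and s lie strictly on opposite sides of the line through r and p, and let α = ∠(r s p) satisfy α ≤ π/2. Then dist(r,q') + dist(q',p) ≤ dist(r,p)/cos(α/2). -/
/-!
Since `q'` and `s` lie on opposite arcs cut off by the chord `rp`, they are opposite vertices of
the cyclic quadrilateral `r s p q'`, so the angle at `q'` is `π - α`. In any triangle with sides
`a = |rq'|`, `b = |q'p|` and angle `θ` at `q'`, the law of cosines reads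
`|rp|² = (a + b)² sin² (θ / 2) + (a - b)² cos² (θ / 2)`, so `|rp| ≥ (a + b) sin (θ / 2)`,
and `sin ((π - α) / 2) = cos (α / 2)`.
-/

open EuclideanGeometry Real Module

namespace EuclideanGeometry

variable {V P : Type*} [NormedAddCommGroup V] [InnerProductSpace ℝ V] [MetricSpace P]
  [NormedAddTorsor V P]

theorem dist_add_dist_mul_sin_angle_div_two_le (p₁ p₂ p₃ : P) :
    (dist p₁ p₂ + dist p₂ p₃) * sin (∠ p₁ p₂ p₃ / 2) ≤ dist p₁ p₃ := by
  set a := dist p₁ p₂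
  set b := dist p₂ p₃
  set t := ∠ p₁ p₂ p₃ / 2
  have hlaw := dist_sq_eq_dist_sq_add_dist_sq_sub_two_mul_dist_mul_dist_mul_cos_angle p₁ p₂ p₃
  rw [dist_comm p₃ p₂, show ∠ p₁ p₂ p₃ = 2 * t by ring, cos_two_mul, cos_sq'] at hlaw
  have hsq : ((a + b) * sin t) ^ 2 ≤ dist p₁ p₃ ^ 2 := by
    have key : dist p₁ p₃ ^ 2 - ((a + b) * sin t) ^ 2 = ((a - b) * cos t) ^ 2 := by
      linear_combination hlaw - (a - b) ^ 2 * sin_sq_add_cos_sq t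
    linarith [sq_nonneg ((a - b) * cos t)]
  exact (abs_le_of_sq_le_sq' hsq dist_nonneg).2

theorem Sphere.angle_add_angle_eq_pi_of_sOppSide [Fact (finrank ℝ V = 2)] {s : Sphere P}
    {p₁ p₂ p₃ p₄ : P} (hp₁ : p₁ ∈ s) (hp₂ : p₂ ∈ s) (hp₃ : p₃ ∈ s) (hp₄ : p₄ ∈ s)
    (hp₁p₂ : p₁ ≠ p₂) (h : line[ℝ, p₁, p₂].SOppSide p₃ p₄) :
    ∠ p₁ p₃ p₂ + ∠ p₁ p₄ p₂ = π := by
  have : FiniteDimensional ℝ V := .of_fact_finrank_eq_two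
  have : Module.Oriented ℝ V (Fin 2) := ⟨(finBasisOfFinrankEq ℝ V Fact.out).orientation⟩
  have hm₁ := left_mem_affineSpan_pair ℝ p₁ p₂
  have hm₂ := right_mem_affineSpan_pair ℝ p₁ p₂
  have hp₃p₁ : p₃ ≠ p₁ := fun he ↦ h.left_notMem (he ▸ hm₁)
  have hp₃p₂ : p₃ ≠ p₂ := fun he ↦ h.left_notMem (he ▸ hm₂)
  have hp₄p₁ : p₄ ≠ p₁ := fun he ↦ h.right_notMem (he ▸ hm₁)
  have hp₄p₂ : p₄ ≠ p₂ := fun he ↦ h.right_notMem (he ▸ hm₂)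
  have hcol : ¬Collinear ℝ {p₁, p₃, p₂} := fun hc ↦
    h.left_notMem (hc.mem_affineSpan_of_mem_of_ne (by simp) (by simp) (by simp) hp₁p₂)
  -- the inscribed angles at `p₃` and `p₄` are equal mod `π` but have opposite signs
  have h2 := Sphere.two_zsmul_oangle_eq hp₁ hp₃ hp₄ hp₂ hp₃p₁ hp₃p₂ hp₄p₁ hp₄p₂
  have hsign := h.oangle_sign_eq_neg hm₁ hm₂
  rw [angle_eq_abs_oangle_toReal hp₃p₁.symm hp₃p₂.symm, angle_comm,
    angle_eq_abs_oangle_toReal hp₄p₂.symm hp₄p₁.symm]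
  refine Real.Angle.abs_toReal_add_abs_toReal_eq_pi_of_two_zsmul_add_eq_zero_of_sign_eq ?_ ?_ ?_
  · rw [oangle_rev p₁ p₄ p₂, smul_add, h2, smul_neg, add_neg_cancel]
  · rw [oangle_rev p₁ p₄ p₂, Real.Angle.sign_neg, hsign, neg_neg]
  · rwa [ne_eq, oangle_sign_eq_zero_iff_collinear]

end EuclideanGeometry

open scoped EuclideanSpace

theorem stmt_6_general (s r p q' o : EuclideanSpace ℝ (Fin 2)) (ρ α : ℝ)
    (hs : dist o s = ρ) (hr : dist o r = ρ) (hp : dist o p = ρ) (hq' : dist o q' = ρ)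
    (hncol : ¬ Collinear ℝ ({r, p, s} : Set (EuclideanSpace ℝ (Fin 2))))
    (hside : (affineSpan ℝ ({r, p} : Set (EuclideanSpace ℝ (Fin 2)))).SOppSide q' s)
    (hα : α = ∠ r s p) :
    dist r q' + dist q' p ≤ dist r p / Real.cos (α / 2) := by
  have hS {x} (hx : dist o x = ρ) : x ∈ (⟨o, ρ⟩ : Sphere (EuclideanSpace ℝ (Fin 2))) :=
    mem_sphere'.2 hx
  have hsupp : ∠ r q' p + α = π := hα ▸
    Sphere.angle_add_angle_eq_pi_of_sOppSide (hS hr) (hS hp) (hS hq') (hS hs)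
      (ne₁₂_of_not_collinear hncol) hside
  have hαπ : α < π := by
    rw [hα]; apply angle_lt_pi_of_not_collinear; rwa [Set.pair_comm]
  have hcos : 0 < cos (α / 2) :=
    cos_pos_of_mem_Ioo ⟨by linarith [hα ▸ angle_nonneg r s p, pi_pos], by linarith⟩
  rw [le_div_iff₀ hcos]
  calc (dist r q' + dist q' p) * cos (α / 2)
      = (dist r q' + dist q' p) * sin (∠ r q' p / 2) := by
        rw [show ∠ r q' p / 2 = π / 2 - α / 2 by linarith, sin_pi_div_two_sub]
    _ ≤ dist r p := dist_add_dist_mul_sin_angle_div_two_le r q' p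

theorem stmt_6 (s r p q' o : EuclideanSpace ℝ (Fin 2)) (ρ α : ℝ)
    (hρ : 0 < ρ)
    (hs : dist o s = ρ) (hr : dist o r = ρ) (hp : dist o p = ρ) (hq' : dist o q' = ρ)
    (hncol : ¬ Collinear ℝ ({r, p, s} : Set (EuclideanSpace ℝ (Fin 2))))
    (hside : (affineSpan ℝ ({r, p} : Set (EuclideanSpace ℝ (Fin 2)))).SOppSide q' s)
    (hα : α = ∠ r s p) (hα2 : α ≤ π / 2) :
    dist r q' + dist q' p ≤ dist r p / Real.cos (α / 2) :=
  stmt_6_general s r p q' o ρ α hs hr hp hq' hncol hside hα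
end
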